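/- arXiv:1203.6860 — 5 statements merged into one kernel-verified Lean document; each statement's English description precedes it below -/
import Mathlib

section
/- Let c : ℝ → ℝ be continuous and suppose that the function τ ↦ c(τ)·exp(−τ) is strictly increasing on [0,∞) and satisfies c(τ)·exp(−τ) > 1 for all τ ≥ 0. Then for every t ≥ 0 the function τ ↦ 1/c(τ) is integrable on the interval (t, ∞) and ∫_{(t,∞)} 1/c(τ) dτ ≤ 1/c(t). -/
/-! Since `τ ↦ c τ * exp (-τ)` increases from its positive value at `t`, for `τ > t` we have
`1 / c τ ≤ exp (-τ) / (c t * exp (-t))`, and the right-hand side integrates over `(t, ∞)`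
to exactly `1 / c t`. -/

open MeasureTheory Set Real

theorem integrableOn_and_setIntegral_le_of_nonneg_of_le {α : Type*} [MeasurableSpace α]
    {μ : Measure α} {s : Set α} {f g : α → ℝ} (hs : MeasurableSet s)
    (hf : AEStronglyMeasurable f (μ.restrict s)) (hg : IntegrableOn g s μ)
    (hf_nonneg : ∀ x ∈ s, 0 ≤ f x) (hfg : ∀ x ∈ s, f x ≤ g x) :
    IntegrableOn f s μ ∧ ∫ x in s, f x ∂μ ≤ ∫ x in s, g x ∂μ := by
  have hfi : IntegrableOn f s μ := by
    refine hg.mono' hf ?_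
    filter_upwards [ae_restrict_mem hs] with x hx
    rw [Real.norm_of_nonneg (hf_nonneg x hx)]
    exact hfg x hx
  exact ⟨hfi, setIntegral_mono_on hfi hg hs hfg⟩

theorem one_div_le_exp_neg_div_of_mul_exp_neg_le {a b s t : ℝ} (ha : 0 < a * exp (-s))
    (hab : a * exp (-s) ≤ b * exp (-t)) : 1 / b ≤ exp (-t) / (a * exp (-s)) := by
  have hb : 0 < b := pos_of_mul_pos_left (ha.trans_le hab) (exp_pos _).le
  rw [div_le_div_iff₀ hb ha]
  linarith

theorem setIntegral_exp_neg_div_Ioi {t a : ℝ} (ha : a ≠ 0) :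
    ∫ τ in Ioi t, exp (-τ) / (a * exp (-t)) = 1 / a := by
  rw [integral_div, integral_exp_neg_Ioi]
  field_simp

/-- Key integral estimate (equation (intc)) in the proof of existence of admissible
rescaling functions: if `τ ↦ c τ * exp (-τ)` is strictly increasing on `[0,∞)` and `> 1`
there, then for every `t ≥ 0` the function `1 / c` is integrable on `(t, ∞)` and
`∫_{(t,∞)} 1 / c τ dτ ≤ 1 / c t`. -/
theorem background_cohomology_integral_estimate
    (c : ℝ → ℝ) (hc : Continuous c)
    (hmono : StrictMonoOn (fun τ => c τ * Real.exp (-τ)) (Set.Ici (0 : ℝ)))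
    (hgt : ∀ τ ≥ (0 : ℝ), 1 < c τ * Real.exp (-τ)) :
    ∀ t ≥ (0 : ℝ),
      IntegrableOn (fun τ => 1 / c τ) (Set.Ioi t) ∧
      (∫ τ in Set.Ioi t, 1 / c τ) ≤ 1 / c t := by
  intro t ht
  have hc_pos : ∀ τ ≥ (0 : ℝ), 0 < c τ := fun τ hτ =>
    pos_of_mul_pos_left (one_pos.trans (hgt τ hτ)) (exp_pos _).le
  have hbound : ∀ τ ∈ Ioi t, 1 / c τ ≤ exp (-τ) / (c t * exp (-t)) := fun τ hτ =>
    one_div_le_exp_neg_div_of_mul_exp_neg_le (one_pos.trans (hgt t ht))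
      (hmono.le_iff_le ht (ht.trans (le_of_lt hτ)) |>.mpr (le_of_lt hτ))
  have hnonneg : ∀ τ ∈ Ioi t, 0 ≤ 1 / c τ := fun τ hτ =>
    (one_div_pos.mpr (hc_pos τ (ht.trans (le_of_lt hτ)))).le
  obtain ⟨hint, hle⟩ := integrableOn_and_setIntegral_le_of_nonneg_of_le measurableSet_Ioi
    (hc.measurable.const_div 1).aestronglyMeasurable
    ((integrableOn_exp_neg_Ioi t).div_const _) hnonneg hbound
  exact ⟨hint, hle.trans_eq (setIntegral_exp_neg_div_Ioi (hc_pos t ht).ne')⟩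
end

section
/- Let c : ℝ → ℝ be continuous and suppose that the function τ ↦ c(τ)·exp(−τ) is strictly increasing on [0,∞) and satisfies c(τ)·exp(−τ) > 1 for all τ ≥ 0. Then for every t ≥ 0 one has (∫_{(t,∞)} 1/c(τ) dτ)⁻¹ ≥ c(t); moreover, if c(t) → +∞ as t → +∞, then (∫_{(t,∞)} 1/c(τ) dτ)⁻¹ → +∞ as t → +∞. -/
/-!
Monotonicity of `c τ e^{-τ}` on `[t, ∞)` gives the pointwise bound
`1 / c τ ≤ e^{t - τ} / c t` for `τ ≥ t`, and `∫_t^∞ e^{t - τ} dτ = 1`, so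
`∫_t^∞ dτ / c τ ≤ 1 / c t`. Inverting yields `c t ≤ (∫_t^∞ dτ / c τ)⁻¹`,
and the divergence follows by comparison with `c`.
-/

open MeasureTheory Filter Set Real

section ReciprocalIntegral

variable {c : ℝ → ℝ} {t : ℝ}

lemma pos_of_monotoneOn_mul_exp_neg (hct : 0 < c t)
    (hmono : MonotoneOn (fun τ => c τ * exp (-τ)) (Ici t)) {τ : ℝ} (hτ : t ≤ τ) :
    0 < c τ :=
  pos_of_mul_pos_left ((mul_pos hct (exp_pos _)).trans_le (hmono self_mem_Ici hτ hτ))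
    (exp_pos _).le

lemma one_div_le_of_monotoneOn_mul_exp_neg (hct : 0 < c t)
    (hmono : MonotoneOn (fun τ => c τ * exp (-τ)) (Ici t)) {τ : ℝ} (hτ : t ≤ τ) :
    1 / c τ ≤ exp t / c t * exp (-τ) := by
  have hcτ := pos_of_monotoneOn_mul_exp_neg hct hmono hτ
  calc 1 / c τ = exp (-τ) / (c τ * exp (-τ)) := by field_simp
    _ ≤ exp (-τ) / (c t * exp (-t)) :=
        div_le_div_of_nonneg_left (exp_pos _).le (by positivity) (hmono self_mem_Ici hτ hτ)
    _ = exp t / c t * exp (-τ) := by rw [exp_neg t]; field_simp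

lemma integrableOn_one_div_Ioi_of_monotoneOn_mul_exp_neg (hc : Measurable c) (hct : 0 < c t)
    (hmono : MonotoneOn (fun τ => c τ * exp (-τ)) (Ici t)) :
    IntegrableOn (fun τ => 1 / c τ) (Ioi t) := by
  refine Integrable.mono' ((integrableOn_exp_neg_Ioi t).const_mul (exp t / c t))
    (hc.const_div 1).aestronglyMeasurable ?_
  filter_upwards [ae_restrict_mem measurableSet_Ioi] with τ hτ
  have hcτ := pos_of_monotoneOn_mul_exp_neg hct hmono (le_of_lt hτ)
  rw [norm_of_nonneg (by positivity)]
  exact one_div_le_of_monotoneOn_mul_exp_neg hct hmono (le_of_lt hτ)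

lemma setIntegral_one_div_Ioi_le_of_monotoneOn_mul_exp_neg (hc : Measurable c) (hct : 0 < c t)
    (hmono : MonotoneOn (fun τ => c τ * exp (-τ)) (Ici t)) :
    ∫ τ in Ioi t, 1 / c τ ≤ 1 / c t :=
  calc ∫ τ in Ioi t, 1 / c τ ≤ ∫ τ in Ioi t, exp t / c t * exp (-τ) :=
        setIntegral_mono_on (integrableOn_one_div_Ioi_of_monotoneOn_mul_exp_neg hc hct hmono)
          ((integrableOn_exp_neg_Ioi t).const_mul _) measurableSet_Ioi
          fun τ hτ => one_div_le_of_monotoneOn_mul_exp_neg hct hmono (le_of_lt hτ)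
    _ = 1 / c t := by
        rw [integral_const_mul, integral_exp_neg_Ioi, div_mul_eq_mul_div, ← exp_add,
          add_neg_cancel, exp_zero]

lemma setIntegral_one_div_Ioi_pos_of_monotoneOn_mul_exp_neg (hc : Measurable c) (hct : 0 < c t)
    (hmono : MonotoneOn (fun τ => c τ * exp (-τ)) (Ici t)) :
    0 < ∫ τ in Ioi t, 1 / c τ := by
  have hpos : ∀ τ ∈ Ioi t, 0 < 1 / c τ := fun τ hτ =>
    one_div_pos.2 (pos_of_monotoneOn_mul_exp_neg hct hmono (le_of_lt hτ))
  rw [setIntegral_pos_iff_support_of_nonneg_ae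
    ((ae_restrict_mem measurableSet_Ioi).mono fun τ hτ => (hpos τ hτ).le)
    (integrableOn_one_div_Ioi_of_monotoneOn_mul_exp_neg hc hct hmono),
    inter_eq_right.2 fun τ hτ => Function.mem_support.2 (hpos τ hτ).ne']
  simp

lemma le_inv_setIntegral_one_div_Ioi_of_monotoneOn_mul_exp_neg (hc : Measurable c)
    (hct : 0 < c t) (hmono : MonotoneOn (fun τ => c τ * exp (-τ)) (Ici t)) :
    c t ≤ (∫ τ in Ioi t, 1 / c τ)⁻¹ := by
  rw [le_inv_comm₀ hct (setIntegral_one_div_Ioi_pos_of_monotoneOn_mul_exp_neg hc hct hmono),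
    ← one_div]
  exact setIntegral_one_div_Ioi_le_of_monotoneOn_mul_exp_neg hc hct hmono

end ReciprocalIntegral

/-- The estimate `s'(t) = (∫_t^∞ dτ/c(τ))⁻¹ ≥ c(t)` from the proof of existence of
admissible functions, together with the divergence of the left-hand side when
`c(t) → ∞`. -/
theorem background_cohomology_reciprocal_integral_estimate
    (c : ℝ → ℝ) (hc : Continuous c)
    (hmono : StrictMonoOn (fun τ => c τ * Real.exp (-τ)) (Set.Ici (0 : ℝ)))
    (hgt : ∀ τ ≥ (0 : ℝ), 1 < c τ * Real.exp (-τ)) :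
    (∀ t ≥ (0 : ℝ), c t ≤ (∫ τ in Set.Ioi t, 1 / c τ)⁻¹) ∧
    (Filter.Tendsto c Filter.atTop Filter.atTop →
      Filter.Tendsto (fun t => (∫ τ in Set.Ioi t, 1 / c τ)⁻¹)
        Filter.atTop Filter.atTop) := by
  have key : ∀ t ≥ (0 : ℝ), c t ≤ (∫ τ in Ioi t, 1 / c τ)⁻¹ := fun t ht =>
    le_inv_setIntegral_one_div_Ioi_of_monotoneOn_mul_exp_neg hc.measurable
      (pos_of_mul_pos_left (one_pos.trans (hgt t ht)) (exp_pos _).le)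
      (hmono.monotoneOn.mono (Ici_subset_Ici.2 ht))
  exact ⟨key, fun hc_top => tendsto_atTop_mono' _ ((eventually_ge_atTop 0).mono key) hc_top⟩
end

section
/- Let r : ℝ → ℝ be twice differentiable with r'(τ) > 0 and r''(τ) > 0 for all τ ≥ 0, and let c : ℝ → ℝ be continuous with c(τ) ≥ r'(τ)²/r''(τ) for all τ ≥ 0. Then for every t ≥ 0 the function τ ↦ 1/c(τ) is integrable on (t, ∞) and ∫_{(t,∞)} 1/c(τ) dτ ≤ 1/r'(t). -/
open MeasureTheory Filter Set

/-!
Since `c ≥ r'² / r''`, the integrand `1 / c` is dominated by `r'' / r'² = (-1 / r')'`, so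
`∫_t^b 1 / c ≤ 1 / r'(t) - 1 / r'(b) ≤ 1 / r'(t)` for every `b ≥ t`; a nonnegative function with
uniformly bounded interval integrals is integrable on `(t, ∞)`, with the same bound.
-/

section TailIntegral

variable {f : ℝ → ℝ} {t M : ℝ}

theorem integrableOn_Ioi_of_nonneg_of_intervalIntegral_le
    (hf : ∀ b, IntegrableOn f (Ioc t b)) (hf₀ : ∀ x ≥ t, 0 ≤ f x)
    (hM : ∀ b ≥ t, ∫ x in t..b, f x ≤ M) : IntegrableOn f (Ioi t) := by
  refine integrableOn_Ioi_of_intervalIntegral_norm_bounded M t hf tendsto_id ?_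
  filter_upwards [eventually_ge_atTop t] with b hb
  calc ∫ x in t..b, ‖f x‖ = ∫ x in t..b, f x :=
        intervalIntegral.integral_congr fun x hx =>
          Real.norm_of_nonneg (hf₀ x (by rw [uIcc_of_le hb] at hx; exact hx.1))
    _ ≤ M := hM b hb

theorem setIntegral_Ioi_le_of_intervalIntegral_le (hf : IntegrableOn f (Ioi t))
    (hM : ∀ b ≥ t, ∫ x in t..b, f x ≤ M) : ∫ x in Ioi t, f x ≤ M :=
  le_of_tendsto (intervalIntegral_tendsto_integral_Ioi t hf tendsto_id)
    ((eventually_ge_atTop t).mono hM)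

end TailIntegral

theorem intervalIntegral_le_inv_sub_inv_of_le_div_sq {f g g' : ℝ → ℝ} {a b : ℝ} (hab : a ≤ b)
    (hg : ∀ x ∈ Icc a b, HasDerivAt g (g' x) x) (hg₀ : ∀ x ∈ Icc a b, 0 < g x)
    (hf : IntegrableOn f (Icc a b)) (hfg : ∀ x ∈ Ioo a b, f x ≤ g' x / g x ^ 2) :
    ∫ x in a..b, f x ≤ (g a)⁻¹ - (g b)⁻¹ := by
  have hderiv : ∀ x ∈ Icc a b, HasDerivAt (fun y => -(g y)⁻¹) (g' x / g x ^ 2) x := fun x hx =>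
    (((hg x hx).inv (hg₀ x hx).ne').neg).congr_deriv (by ring)
  convert intervalIntegral.integral_le_sub_of_hasDeriv_right_of_le hab
    (fun x hx => (hderiv x hx).continuousAt.continuousWithinAt)
    (fun x hx => (hderiv x (Ioo_subset_Icc_self hx)).hasDerivWithinAt) hf hfg using 1
  ring

theorem one_div_le_div_sq_of_sq_div_le {a b c : ℝ} (ha : 0 < a) (hb : 0 < b)
    (h : a ^ 2 / b ≤ c) : 1 / c ≤ b / a ^ 2 := by
  simpa only [one_div_div] using one_div_le_one_div_of_le (by positivity) h

theorem background_cohomology_tail_integral_bound_general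
    (r' r'' : ℝ → ℝ)
    (hr' : ∀ τ : ℝ, HasDerivAt r' (r'' τ) τ)
    (hr'pos : ∀ τ ≥ (0 : ℝ), 0 < r' τ)
    (hr''pos : ∀ τ ≥ (0 : ℝ), 0 < r'' τ)
    (c : ℝ → ℝ) (hc : Continuous c)
    (hcge : ∀ τ ≥ (0 : ℝ), r' τ ^ 2 / r'' τ ≤ c τ) :
    ∀ t ≥ (0 : ℝ),
      IntegrableOn (fun τ => 1 / c τ) (Set.Ioi t) ∧
      (∫ τ in Set.Ioi t, 1 / c τ) ≤ 1 / r' t := by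
  intro t ht
  have hcpos : ∀ τ ≥ t, 0 < c τ := fun τ hτ =>
    (div_pos (pow_pos (hr'pos τ (ht.trans hτ)) 2) (hr''pos τ (ht.trans hτ))).trans_le
      (hcge τ (ht.trans hτ))
  have hc_int : ∀ b, IntegrableOn (fun τ => 1 / c τ) (Icc t b) := fun b =>
    (continuousOn_const.div hc.continuousOn fun x hx => (hcpos x hx.1).ne').integrableOn_Icc
  have hbound : ∀ b ≥ t, ∫ τ in t..b, 1 / c τ ≤ 1 / r' t := fun b hb => by
    have hb₀ : 0 < (r' b)⁻¹ := inv_pos.2 (hr'pos b (ht.trans hb))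
    have := intervalIntegral_le_inv_sub_inv_of_le_div_sq hb (fun x _ => hr' x)
      (fun x hx => hr'pos x (ht.trans hx.1)) (hc_int b) fun x hx =>
        one_div_le_div_sq_of_sq_div_le (hr'pos x (ht.trans hx.1.le))
          (hr''pos x (ht.trans hx.1.le)) (hcge x (ht.trans hx.1.le))
    rw [one_div]
    linarith
  have hint := integrableOn_Ioi_of_nonneg_of_intervalIntegral_le
    (fun b => (hc_int b).mono_set Ioc_subset_Icc_self)
    (fun x hx => (one_div_pos.2 (hcpos x hx)).le) hbound
  exact ⟨hint, setIntegral_Ioi_le_of_intervalIntegral_le hint hbound⟩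

/-- The estimate `∫_t^∞ 1/c(τ) dτ ≤ 1/r'(t)` from the final part of the proof of
existence of admissible functions: if `c ≥ r'²/r''` on `[0,∞)` with `r', r'' > 0` there,
then `1/c` is integrable on `(t,∞)` and its integral is at most `1/r'(t)`. -/
theorem background_cohomology_tail_integral_bound
    (r r' r'' : ℝ → ℝ)
    (hr : ∀ τ : ℝ, HasDerivAt r (r' τ) τ)
    (hr' : ∀ τ : ℝ, HasDerivAt r' (r'' τ) τ)
    (hr'pos : ∀ τ ≥ (0 : ℝ), 0 < r' τ)
    (hr''pos : ∀ τ ≥ (0 : ℝ), 0 < r'' τ)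
    (c : ℝ → ℝ) (hc : Continuous c)
    (hcge : ∀ τ ≥ (0 : ℝ), r' τ ^ 2 / r'' τ ≤ c τ) :
    ∀ t ≥ (0 : ℝ),
      IntegrableOn (fun τ => 1 / c τ) (Set.Ioi t) ∧
      (∫ τ in Set.Ioi t, 1 / c τ) ≤ 1 / r' t :=
  background_cohomology_tail_integral_bound_general r' r'' hr' hr'pos hr''pos c hc hcge
end

section
/- Let r : ℝ → ℝ be twice differentiable with r'(τ) > 0 and r''(τ) > 0 for all τ ≥ 0, and let c : ℝ → ℝ be continuous with c(τ) ≥ r'(τ)²/r''(τ) for all τ ≥ 0. Assume the function τ ↦ 1/c(τ) is integrable on (u, ∞) with F(u) := ∫_{(u,∞)} 1/c(τ) dτ > 0 for every u ≥ 0. Define s(t) := r(0) + ∫_0^t F(u)⁻¹ du. Then s(t) ≥ r(t) for all t ≥ 0. -/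
open MeasureTheory Filter Set Topology

/-!
Since `c ≥ r'² / r''`, the integrand `1 / c` is dominated on `[u, ∞)` by `r'' / r'²`, the
derivative of `-1 / r'`; as `-1 / r' < 0`, this gives `F u ≤ 1 / r' u`, that is `r' ≤ F⁻¹`.
Integrating from `0` to `t` yields `r t - r 0 ≤ s t - r 0`.
-/

theorem setIntegral_Ioi_le_sub_of_le_deriv {f g g' : ℝ → ℝ} {a M : ℝ}
    (hg : ∀ x ≥ a, HasDerivAt g (g' x) x) (hgM : ∀ x ≥ a, g x ≤ M)
    (hf : IntegrableOn f (Ioi a)) (hfg : ∀ x ≥ a, f x ≤ g' x) :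
    ∫ x in Ioi a, f x ≤ M - g a := by
  refine le_of_tendsto (intervalIntegral_tendsto_integral_Ioi a hf tendsto_id) ?_
  filter_upwards [eventually_ge_atTop a] with T hT
  have hfT : IntegrableOn f (Icc a T) := by
    rw [integrableOn_Icc_iff_integrableOn_Ioc]
    exact hf.mono_set Ioc_subset_Ioi_self
  calc ∫ x in a..T, f x ≤ g T - g a :=
        intervalIntegral.integral_le_sub_of_hasDeriv_right_of_le hT
          (fun x hx => (hg x hx.1).continuousAt.continuousWithinAt)
          (fun x hx => (hg x hx.1.le).hasDerivWithinAt) hfT (fun x hx => hfg x hx.1.le)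
    _ ≤ M - g a := by linarith [hgM T hT]

theorem setIntegral_Ioi_le_inv_of_le_deriv_div_sq {f g g' : ℝ → ℝ} {a : ℝ}
    (hg : ∀ x ≥ a, HasDerivAt g (g' x) x) (hg0 : ∀ x ≥ a, 0 < g x)
    (hf : IntegrableOn f (Ioi a)) (hfg : ∀ x ≥ a, f x ≤ g' x / g x ^ 2) :
    ∫ x in Ioi a, f x ≤ (g a)⁻¹ := by
  have hderiv : ∀ x ≥ a, HasDerivAt (fun y => -(g y)⁻¹) (g' x / g x ^ 2) x := fun x hx => by
    simpa only [neg_div, neg_neg] using ((hg x hx).fun_inv (hg0 x hx).ne').fun_neg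
  have hneg : ∀ x ≥ a, -(g x)⁻¹ ≤ 0 := fun x hx => by
    simpa only [neg_nonpos, inv_nonneg] using (hg0 x hx).le
  simpa only [zero_sub, neg_neg] using setIntegral_Ioi_le_sub_of_le_deriv hderiv hneg hf hfg

theorem antitoneOn_setIntegral_Ioi {f : ℝ → ℝ} {a : ℝ} (hf : IntegrableOn f (Ioi a))
    (hf0 : ∀ x > a, 0 ≤ f x) : AntitoneOn (fun u => ∫ x in Ioi u, f x) (Ici a) := by
  intro u hu v _ huv
  refine setIntegral_mono_set (hf.mono_set (Ioi_subset_Ioi hu)) ?_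
    (Ioi_subset_Ioi huv).eventuallyLE
  filter_upwards [ae_restrict_mem measurableSet_Ioi] with x hx
  exact hf0 x (lt_of_le_of_lt hu hx)

theorem background_cohomology_admissible_dominates_general
    (r r' r'' : ℝ → ℝ)
    (hr : ∀ τ : ℝ, HasDerivAt r (r' τ) τ)
    (hr' : ∀ τ : ℝ, HasDerivAt r' (r'' τ) τ)
    (hr'pos : ∀ τ ≥ (0 : ℝ), 0 < r' τ)
    (hr''pos : ∀ τ ≥ (0 : ℝ), 0 < r'' τ)
    (c : ℝ → ℝ)
    (hcge : ∀ τ ≥ (0 : ℝ), r' τ ^ 2 / r'' τ ≤ c τ)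
    (hint : ∀ u ≥ (0 : ℝ), IntegrableOn (fun τ => 1 / c τ) (Set.Ioi u))
    (F : ℝ → ℝ) (hFdef : ∀ u, F u = ∫ τ in Set.Ioi u, 1 / c τ)
    (hFpos : ∀ u ≥ (0 : ℝ), 0 < F u)
    (s : ℝ → ℝ) (hs : ∀ t, s t = r 0 + ∫ u in (0 : ℝ)..t, (F u)⁻¹) :
    ∀ t ≥ (0 : ℝ), r t ≤ s t := by
  intro t ht
  have hquot_pos : ∀ τ ≥ (0 : ℝ), 0 < r' τ ^ 2 / r'' τ := fun τ hτ =>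
    div_pos (pow_pos (hr'pos τ hτ) 2) (hr''pos τ hτ)
  have hinv_c_le : ∀ τ ≥ (0 : ℝ), 1 / c τ ≤ r'' τ / r' τ ^ 2 := fun τ hτ => by
    simpa only [one_div_div] using one_div_le_one_div_of_le (hquot_pos τ hτ) (hcge τ hτ)
  have hr'_le : ∀ u ≥ (0 : ℝ), r' u ≤ (F u)⁻¹ := fun u hu => by
    refine (le_inv_comm₀ (hr'pos u hu) (hFpos u hu)).2 ?_
    rw [hFdef]
    exact setIntegral_Ioi_le_inv_of_le_deriv_div_sq (fun x _ => hr' x)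
      (fun x hx => hr'pos x (hu.trans hx)) (hint u hu) (fun x hx => hinv_c_le x (hu.trans hx))
  have hF_anti : AntitoneOn F (Ici 0) := by
    simpa only [← funext hFdef] using antitoneOn_setIntegral_Ioi (hint 0 le_rfl)
      fun x hx => (one_div_pos.2 ((hquot_pos x hx.le).trans_le (hcge x hx.le))).le
  have hFinv_mono : MonotoneOn (fun u => (F u)⁻¹) (Icc 0 t) := fun a ha b hb hab =>
    inv_anti₀ (hFpos b hb.1) (hF_anti ha.1 hb.1 hab)
  have hftc := intervalIntegral.sub_le_integral_of_hasDeriv_right_of_le ht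
    (fun x _ => (hr x).continuousAt.continuousWithinAt) (fun x _ => (hr x).hasDerivWithinAt)
    (hFinv_mono.integrableOn_isCompact isCompact_Icc) (fun x hx => hr'_le x hx.1.le)
  rw [hs]
  linarith

/-- The concluding estimate `s(t) ≥ r(t)` in the proof of existence of admissible
functions, where `s(t) = r(0) + ∫_0^t (∫_u^∞ dτ/c(τ))⁻¹ du`. -/
theorem background_cohomology_admissible_dominates
    (r r' r'' : ℝ → ℝ)
    (hr : ∀ τ : ℝ, HasDerivAt r (r' τ) τ)
    (hr' : ∀ τ : ℝ, HasDerivAt r' (r'' τ) τ)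
    (hr'pos : ∀ τ ≥ (0 : ℝ), 0 < r' τ)
    (hr''pos : ∀ τ ≥ (0 : ℝ), 0 < r'' τ)
    (c : ℝ → ℝ) (hc : Continuous c)
    (hcge : ∀ τ ≥ (0 : ℝ), r' τ ^ 2 / r'' τ ≤ c τ)
    (hint : ∀ u ≥ (0 : ℝ), IntegrableOn (fun τ => 1 / c τ) (Set.Ioi u))
    (F : ℝ → ℝ) (hFdef : ∀ u, F u = ∫ τ in Set.Ioi u, 1 / c τ)
    (hFpos : ∀ u ≥ (0 : ℝ), 0 < F u)
    (s : ℝ → ℝ) (hs : ∀ t, s t = r 0 + ∫ u in (0 : ℝ)..t, (F u)⁻¹) :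
    ∀ t ≥ (0 : ℝ), r t ≤ s t :=
  background_cohomology_admissible_dominates_general r r' r'' hr hr' hr'pos hr''pos c hcge hint F
    hFdef hFpos s hs
end

section
/- Let α be a type and l a filter on α. Let f₁, f₂, g₁, g₂, v, ν : α → ℝ be functions with f₁(x) > 0, f₂(x) > 0 and g₁(x) ≥ 0, g₂(x) ≥ 0, v(x) ≥ 0, ν(x) ≥ 0 for all x. Let t₁, t₂ > 0 be real numbers and let g : α → ℝ satisfy 0 ≤ g(x) ≤ t₁g₁(x) + t₂g₂(x) for all x. Set f := t₁f₁ + t₂f₂. If for each i = 1, 2 the function x ↦ f_i(x)²v(x)²/(g_i(x)·v(x) + f_i(x)·ν(x) + 1) tends to +∞ along l, then the function x ↦ f(x)²v(x)²/(g(x)·v(x) + f(x)·ν(x) + 1) also tends to +∞ along l. -/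
open Filter

/-- mediant-type inequality -/
lemma min_le_mediant {a₁ a₂ d₁ d₂ : ℝ} (ha₁ : 0 ≤ a₁) (ha₂ : 0 ≤ a₂)
    (hd₁ : 0 < d₁) (hd₂ : 0 < d₂) :
    min (a₁ / d₁) (a₂ / d₂) ≤ (a₁ + a₂) / (d₁ + d₂) := by
  rcases le_total (a₁ / d₁) (a₂ / d₂) with h | h
  · rw [min_eq_left h, div_le_div_iff₀ hd₁ (by positivity)]
    rw [div_le_div_iff₀ hd₁ hd₂] at h
    nlinarith
  · rw [min_eq_right h, div_le_div_iff₀ hd₂ (by positivity)]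
    rw [div_le_div_iff₀ hd₂ hd₁] at h
    nlinarith

/-- The analytic content of Lemma 'admissible1': the set of admissible functions is a
convex cone. -/
theorem admissible_convex_cone
    {α : Type*} (l : Filter α)
    (f₁ f₂ g₁ g₂ v ν g : α → ℝ) (t₁ t₂ : ℝ)
    (hf₁ : ∀ x, 0 < f₁ x) (hf₂ : ∀ x, 0 < f₂ x)
    (hg₁ : ∀ x, 0 ≤ g₁ x) (hg₂ : ∀ x, 0 ≤ g₂ x)
    (hv : ∀ x, 0 ≤ v x) (hν : ∀ x, 0 ≤ ν x)
    (ht₁ : 0 < t₁) (ht₂ : 0 < t₂)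
    (hg : ∀ x, 0 ≤ g x ∧ g x ≤ t₁ * g₁ x + t₂ * g₂ x)
    (h1 : Tendsto (fun x => (f₁ x) ^ 2 * (v x) ^ 2 /
        (g₁ x * v x + f₁ x * ν x + 1)) l atTop)
    (h2 : Tendsto (fun x => (f₂ x) ^ 2 * (v x) ^ 2 /
        (g₂ x * v x + f₂ x * ν x + 1)) l atTop) :
    Tendsto (fun x => (t₁ * f₁ x + t₂ * f₂ x) ^ 2 * (v x) ^ 2 /
        (g x * v x + (t₁ * f₁ x + t₂ * f₂ x) * ν x + 1)) l atTop := by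
  set c : ℝ := max (max t₁ t₂) 1 with hc
  have hc1 : (1 : ℝ) ≤ c := le_max_right _ _
  have hct₁ : t₁ ≤ c := le_trans (le_max_left _ _) (le_max_left _ _)
  have hct₂ : t₂ ≤ c := le_trans (le_max_right _ _) (le_max_left _ _)
  have hcpos : 0 < c := lt_of_lt_of_le one_pos hc1
  -- lower bound function tends to atTop
  have hmin : Tendsto (fun x => min
      (t₁ ^ 2 / c * ((f₁ x) ^ 2 * (v x) ^ 2 / (g₁ x * v x + f₁ x * ν x + 1)))
      (t₂ ^ 2 / c * ((f₂ x) ^ 2 * (v x) ^ 2 / (g₂ x * v x + f₂ x * ν x + 1)))) l atTop := by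
    have A := h1.const_mul_atTop (by positivity : (0:ℝ) < t₁ ^ 2 / c)
    have B := h2.const_mul_atTop (by positivity : (0:ℝ) < t₂ ^ 2 / c)
    rw [tendsto_atTop] at A B ⊢
    intro b
    filter_upwards [A b, B b] with x hA hB using le_min hA hB
  refine tendsto_atTop_mono (fun x => ?_) hmin
  have hd₁ : 0 < g₁ x * v x + f₁ x * ν x + 1 := by
    have := hg₁ x; have := hv x; have := (hf₁ x).le; have := hν x; positivity
  have hd₂ : 0 < g₂ x * v x + f₂ x * ν x + 1 := by
    have := hg₂ x; have := hv x; have := (hf₂ x).le; have := hν x; positivity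
  have hD : 0 < g x * v x + (t₁ * f₁ x + t₂ * f₂ x) * ν x + 1 := by
    have := (hg x).1; have := hv x; have := (hf₁ x).le; have := (hf₂ x).le; have := hν x
    positivity
  have key : min (t₁ ^ 2 * (f₁ x) ^ 2 * (v x) ^ 2 / (c * (g₁ x * v x + f₁ x * ν x + 1)))
      (t₂ ^ 2 * (f₂ x) ^ 2 * (v x) ^ 2 / (c * (g₂ x * v x + f₂ x * ν x + 1)))
      ≤ (t₁ * f₁ x + t₂ * f₂ x) ^ 2 * (v x) ^ 2 /
        (g x * v x + (t₁ * f₁ x + t₂ * f₂ x) * ν x + 1) := by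
    refine le_trans (min_le_mediant (by positivity) (by positivity)
      (by positivity) (by positivity)) ?_
    apply div_le_div₀ (by positivity)
    · nlinarith [sq_nonneg (v x), (hf₁ x).le, (hf₂ x).le, mul_pos ht₁ (hf₁ x),
        mul_pos ht₂ (hf₂ x), mul_nonneg (mul_nonneg ht₁.le (hf₁ x).le)
        (mul_nonneg ht₂.le (hf₂ x).le)]
    · exact hD
    · have h2g := (hg x).2
      have := hv x; have := hν x; have := (hf₁ x).le; have := (hf₂ x).le
      nlinarith [mul_le_mul_of_nonneg_right h2g (hv x),
        mul_le_mul_of_nonneg_right hct₁ (mul_nonneg (hg₁ x) (hv x)),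
        mul_le_mul_of_nonneg_right hct₂ (mul_nonneg (hg₂ x) (hv x)),
        mul_le_mul_of_nonneg_right hct₁ (mul_nonneg (hf₁ x).le (hν x)),
        mul_le_mul_of_nonneg_right hct₂ (mul_nonneg (hf₂ x).le (hν x))]
  refine le_trans (le_of_eq ?_) key
  rw [div_mul_div_comm, div_mul_div_comm]
  ring_nf
end
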